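/- Fix α, β ∈ (0,1). Consider the joint Markov chain on the 8 states (s, y) with predictor state s ∈ {SN, WN, WT, ST} (encoded 0,1,2,3) and branch outcome y ∈ {N, T}: the prediction is 'taken' iff s ∈ {WT, ST}; the transition from (s, y) goes to (s', y') where s' = min(s+1, 3) if y = T and s' = max(s−1, 0) if y = N, and y' = T with probability α, y' = N with probability 1−α when y = N, and y' = N with probability β, y' = T with probability 1−β when y = T. Then for any stationary distribution π of this chain (πᵀ = πᵀP), the long-run misprediction rate m(α,β) := π(SN,T) + π(WN,T) + π(WT,N) + π(ST,N) equals αβ(α+β−2)² / ((α+β)(α²β + αβ² − 3αβ + 1)). -/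
import Mathlib


set_option maxHeartbeats 1000000

open Finset

/-- Two-bit saturating counter update: move one step toward the observed outcome
(`true` = taken), saturating at `0` (strong not-taken) and `3` (strong taken). -/
def upd (s : Fin 4) (y : Bool) : Fin 4 :=
  if y then ⟨min (s.val + 1) 3, by omega⟩ else ⟨s.val - 1, by omega⟩

/-- Outcome transition probabilities of the two-state Markov branch process
`Q = [[1-α, α], [β, 1-β]]` (`false` = N, `true` = T). -/
def outcomeProb (α β : ℝ) : Bool → Bool → ℝ
  | false, false => 1 - α
  | false, true => α
  | true, false => β
  | true, true => 1 - β

/-- Transition matrix of the joint 8-state chain on (predictor state, branch outcome):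
the predictor state is updated deterministically by the current outcome, then the next
outcome is drawn from the Markov branch process. -/
def jointP (α β : ℝ) : Matrix (Fin 4 × Bool) (Fin 4 × Bool) ℝ :=
  fun p q => if q.1 = upd p.1 p.2 then outcomeProb α β p.2 q.2 else 0

/-- Closed-form misprediction rate of the two-bit saturating counter under Markov branch
outcomes: for any stationary distribution `π` of the joint chain, the long-run
misprediction rate `π(SN,T) + π(WN,T) + π(WT,N) + π(ST,N)` equals
`αβ(α+β-2)² / ((α+β)(α²β + αβ² - 3αβ + 1))`. -/
theorem two_bit_markov_misprediction
    (α β : ℝ) (hα : α ∈ Set.Ioo (0 : ℝ) 1) (hβ : β ∈ Set.Ioo (0 : ℝ) 1)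
    (π : Fin 4 × Bool → ℝ)
    (hπ_nonneg : ∀ p, 0 ≤ π p)
    (hπ_sum : ∑ p : Fin 4 × Bool, π p = 1)
    (hπ_stat : ∀ q : Fin 4 × Bool, ∑ p : Fin 4 × Bool, π p * jointP α β p q = π q) :
    π (0, true) + π (1, true) + π (2, false) + π (3, false)
      = α * β * (α + β - 2) ^ 2
          / ((α + β) * (α ^ 2 * β + α * β ^ 2 - 3 * (α * β) + 1)) := by
  obtain ⟨ha0, ha1⟩ := hα
  obtain ⟨hb0, hb1⟩ := hβ
  have e0f := hπ_stat (0, false)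
  have e0t := hπ_stat (0, true)
  have e1f := hπ_stat (1, false)
  have e1t := hπ_stat (1, true)
  have e2f := hπ_stat (2, false)
  have e2t := hπ_stat (2, true)
  have e3f := hπ_stat (3, false)
  simp +decide [Fintype.sum_prod_type, Fin.sum_univ_four, jointP, upd, outcomeProb,
    Fin.ext_iff] at e0f e0t e1f e1t e2f e2t e3f
  have hsum := hπ_sum
  simp [Fintype.sum_prod_type, Fin.sum_univ_four] at hsum
  set A0 := π (0, false); set B0 := π (0, true)
  set A1 := π (1, false); set B1 := π (1, true)
  set A2 := π (2, false); set B2 := π (2, true)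
  set A3 := π (3, false); set B3 := π (3, true)
  have g1 : (1 - α) * A2 = α * (1 - β) * (A0 + A1) := by
    linear_combination e1f + β * e0t + e0f
  have g2 : (1 - α) * B1 = α * (1 - β) * (A0 + A1) := by
    linear_combination (α - 1) * e1t + (α - 1) * (1 - β) * e0t + α * g1
  have g3 : (1 - α) ^ 2 * A3 = α * (1 - β) ^ 2 * (A0 + A1) := by
    linear_combination (1 - α) * e2f + g1 - β * g2
  have g4 : (1 - α) ^ 2 * B2 = α * (1 - β) ^ 2 * (A0 + A1) := by
    linear_combination (-(1 - α) ^ 2) * e2t + (1 - β) * (1 - α) * g2 + α * g3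
  have g5 : β * (1 - α) ^ 2 * B3 = α * (1 - β) ^ 3 * (A0 + A1) := by
    linear_combination (1 - α) ^ 2 * e3f + g3 - β * g4
  have hs : β * (1 - α) ^ 2 * (B0 + B1 + A2 + A3)
      = α * β * (α + β - 2) ^ 2 * (A0 + A1) := by
    linear_combination (-(β * (1 - α) ^ 2)) * e0t + β * (1 - α) * g2 + β * (1 - α) * g1
      + β * g3
  have hu : (A0 + A1) * ((α + β) * (α ^ 2 * β + α * β ^ 2 - 3 * (α * β) + 1))
      = β * (1 - α) ^ 2 := by
    linear_combination β * (1 - α) ^ 2 * hsum + β * (1 - α) ^ 2 * e0t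
      - β * (1 - α) * (g1 + g2) - β * (g3 + g4) - g5
  have hx : (0:ℝ) < 1 - α := by linarith
  have hy : (0:ℝ) < 1 - β := by linarith
  have hE : (0:ℝ) < α ^ 2 * β + α * β ^ 2 - 3 * (α * β) + 1 := by
    nlinarith [mul_pos (mul_pos hx hx) hb0, mul_pos (mul_pos hy hy) ha0,
      mul_pos hx hy]
  have hD : ((α + β) * (α ^ 2 * β + α * β ^ 2 - 3 * (α * β) + 1)) ≠ 0 :=
    ne_of_gt (mul_pos (by linarith) hE)
  rw [eq_div_iff hD]
  have hc : ((B0 + B1 + A2 + A3) * ((α + β) * (α ^ 2 * β + α * β ^ 2 - 3 * (α * β) + 1))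
      - α * β * (α + β - 2) ^ 2) * (β * (1 - α) ^ 2) = 0 := by
    linear_combination ((α + β) * (α ^ 2 * β + α * β ^ 2 - 3 * (α * β) + 1)) * hs
      + (α * β * (α + β - 2) ^ 2) * hu
  have hz : β * (1 - α) ^ 2 ≠ 0 := ne_of_gt (mul_pos hb0 (by positivity))
  have := (mul_eq_zero.1 hc).resolve_right hz
  linarith
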